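/- arXiv:2402.14347 — 2 statements merged into one kernel-verified Lean document; each statement's English description precedes it below -/
import Mathlib

section
/- With h₂ = e₁e₂ + 2x(e₁e₊-e₂e₃) + 2y(e₂e₊+e₁e₃) + 2z(e₃e₊-e₁e₂) and h₁ = (e₁e₂ + e₃e₊) - h₂, where x² + y² + (z-1/4)² = 1/16, the elements h₁ and h₂ commute: h₁h₂ = h₂h₁. -/
open CliffordAlgebra Polynomial

noncomputable section

/-- The quadratic form of signature (4,1) on ℝ⁵. -/
def Qf : QuadraticForm ℝ (Fin 5 → ℝ) := QuadraticMap.weightedSumSquares ℝ ![1,1,1,1,-1]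

/-- Conformal geometric algebra of ℝ^{4,1}. -/
abbrev CGA := CliffordAlgebra Qf

/-- The orthonormal generators e₁, e₂, e₃, e₊, e₋ (indices 0,1,2,3,4). -/
def e (a : Fin 5) : CGA := ι Qf (Pi.single a 1)

def h₂ (x y z : ℝ) : CGA :=
  e 0 * e 1 + (2*x) • (e 0 * e 3 - e 1 * e 2) + (2*y) • (e 1 * e 3 + e 0 * e 2)
    + (2*z) • (e 2 * e 3 - e 0 * e 1)

def h₁ (x y z : ℝ) : CGA := (e 0 * e 1 + e 2 * e 3) - h₂ x y z

lemma polar_single {a b : Fin 5} (h : a ≠ b) :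
    QuadraticMap.polar Qf (Pi.single a 1) (Pi.single b 1) = 0 := by
  simp [QuadraticMap.polar, Qf, QuadraticMap.weightedSumSquares_apply, Pi.single_apply,
    Fin.sum_univ_five, Pi.add_apply]
  fin_cases a <;> fin_cases b <;> simp_all

lemma ee_swap {a b : Fin 5} (h : a ≠ b) : e b * e a = -(e a * e b) := by
  have := CliffordAlgebra.ι_mul_ι_add_swap (Q := Qf) (Pi.single a 1) (Pi.single b 1)
  rw [polar_single h] at this
  simp only [map_zero] at this
  simp only [e]
  rw [eq_neg_iff_add_eq_zero, add_comm]
  exact this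

lemma ee_swap' {a b : Fin 5} (h : a ≠ b) (w : CGA) :
    e b * (e a * w) = -(e a * (e b * w)) := by
  rw [← mul_assoc, ee_swap h, neg_mul, mul_assoc]

lemma ee_sq {a : Fin 5} (h : a.val < 4) : e a * e a = 1 := by
  rw [e, ι_sq_scalar]
  have : Qf (Pi.single a 1) = 1 := by
    simp [Qf, QuadraticMap.weightedSumSquares_apply, Pi.single_apply, Fin.sum_univ_five]
    fin_cases a <;> simp_all
  rw [this, map_one]

lemma ee_sq' {a : Fin 5} (h : a.val < 4) (w : CGA) : e a * (e a * w) = w := by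
  rw [← mul_assoc, ee_sq h, one_mul]

lemma t10 : e 1 * e 0 = -(e 0 * e 1) := ee_swap (by decide)
lemma t20 : e 2 * e 0 = -(e 0 * e 2) := ee_swap (by decide)
lemma t30 : e 3 * e 0 = -(e 0 * e 3) := ee_swap (by decide)
lemma t21 : e 2 * e 1 = -(e 1 * e 2) := ee_swap (by decide)
lemma t31 : e 3 * e 1 = -(e 1 * e 3) := ee_swap (by decide)
lemma t32 : e 3 * e 2 = -(e 2 * e 3) := ee_swap (by decide)
lemma s10 (w : CGA) : e 1 * (e 0 * w) = -(e 0 * (e 1 * w)) := ee_swap' (by decide) w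
lemma s20 (w : CGA) : e 2 * (e 0 * w) = -(e 0 * (e 2 * w)) := ee_swap' (by decide) w
lemma s30 (w : CGA) : e 3 * (e 0 * w) = -(e 0 * (e 3 * w)) := ee_swap' (by decide) w
lemma s21 (w : CGA) : e 2 * (e 1 * w) = -(e 1 * (e 2 * w)) := ee_swap' (by decide) w
lemma s31 (w : CGA) : e 3 * (e 1 * w) = -(e 1 * (e 3 * w)) := ee_swap' (by decide) w
lemma s32 (w : CGA) : e 3 * (e 2 * w) = -(e 2 * (e 3 * w)) := ee_swap' (by decide) w
lemma q0 : e 0 * e 0 = 1 := ee_sq (by decide)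
lemma q1 : e 1 * e 1 = 1 := ee_sq (by decide)
lemma q2 : e 2 * e 2 = 1 := ee_sq (by decide)
lemma q3 : e 3 * e 3 = 1 := ee_sq (by decide)
lemma r0 (w : CGA) : e 0 * (e 0 * w) = w := ee_sq' (by decide) w
lemma r1 (w : CGA) : e 1 * (e 1 * w) = w := ee_sq' (by decide) w
lemma r2 (w : CGA) : e 2 * (e 2 * w) = w := ee_sq' (by decide) w
lemma r3 (w : CGA) : e 3 * (e 3 * w) = w := ee_sq' (by decide) w

lemma comm_main (x y z : ℝ) :
    (e 0 * e 1 + e 2 * e 3) * h₂ x y z = h₂ x y z * (e 0 * e 1 + e 2 * e 3) := by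
  simp only [h₂, mul_add, add_mul, mul_sub, sub_mul, smul_mul_assoc, mul_smul_comm,
    mul_assoc, mul_neg, neg_mul, neg_neg, smul_neg,
    s10, s20, s30, s21, s31, s32, r0, r1, r2, r3, t10, t20, t30, t21, t31, t32,
    q0, q1, q2, q3, mul_one, one_mul, smul_add, smul_sub, smul_neg]
  module

/-- h₁ and h₂ commute. -/
theorem villarceau_factors_commute (x y z : ℝ)
    (hs : x^2 + y^2 + (z - 1/4)^2 = 1/16) :
    h₁ x y z * h₂ x y z = h₂ x y z * h₁ x y z := by
  rw [h₁, sub_mul, mul_sub, comm_main]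
end
end

section
/- Every element of the form α(e₁e₂e₃e₊ - 1) + β(e₁e₂ + e₃e₊) with (α, β) ∈ R² (equivalently, every point on the line through n₁ and n₂ in the kinematic image space) is a non-invertible element of CGA, except when α = β = 0. -/
open CliffordAlgebra Polynomial

noncomputable section

/-!
Write `u = e₁e₂` and `v = e₃e₊`. They commute and both square to `-1`, so `I = uv` satisfies
`I² = 1` and `(u + v) I = -(u + v)`: every `α (I - 1) + β (u + v)` is annihilated on the right by
`I + 1`. This is nonzero because `e₁` anticommutes with `I`: were `I = -1`, then `e₁ = -e₁`, and
`2 = e₁ (e₁ + e₁) = 0`.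
-/

namespace QuadraticMap

variable {ι S R : Type*} [Fintype ι] [DecidableEq ι] [CommRing R] [Monoid S]
  [DistribMulAction S R] [SMulCommClass S R R] (w : ι → S)

theorem weightedSumSquares_single (i : ι) :
    weightedSumSquares R w (Pi.single i 1) = w i • (1 : R) := by
  rw [weightedSumSquares_apply, Finset.sum_eq_single i] <;> simp +contextual

theorem isOrtho_weightedSumSquares_single {i j : ι} (hij : i ≠ j) :
    (weightedSumSquares R w).IsOrtho (Pi.single i 1) (Pi.single j 1) := by
  rw [isOrtho_def]
  simp only [weightedSumSquares_apply, ← Finset.sum_add_distrib]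
  refine Finset.sum_congr rfl fun k _ => ?_
  by_cases hi : k = i <;> by_cases hj : k = j <;> simp_all

end QuadraticMap

def Anticommute {R : Type*} [Mul R] [Neg R] (a b : R) : Prop := a * b = -(b * a)

namespace Anticommute

variable {R : Type*} [Ring R] {a b c : R}

theorem symm (h : Anticommute a b) : Anticommute b a := by
  rw [Anticommute, h, neg_neg]

theorem commute_mul_right (hb : Anticommute a b) (hc : Anticommute a c) : Commute a (b * c) := by
  rw [Commute, SemiconjBy, ← mul_assoc, hb, neg_mul, mul_assoc, hc, mul_neg, neg_neg, mul_assoc]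

theorem anticommute_mul_right (hb : Anticommute a b) (hc : Commute a c) :
    Anticommute a (b * c) := by
  rw [Anticommute, ← mul_assoc, hb, neg_mul, mul_assoc, hc.eq, mul_assoc]

theorem mul_mul_self_eq_neg_one (h : Anticommute a b) (ha : a * a = 1) (hb : b * b = 1) :
    a * b * (a * b) = -1 := by
  rw [mul_assoc a b, ← mul_assoc b, h.symm]
  simp only [neg_mul, mul_neg, ← mul_assoc, ha, one_mul, hb]

theorem add_one_ne_zero (h : Anticommute a b) (ha : a * a = 1) (two_ne : (2 : R) ≠ 0) :
    b + 1 ≠ 0 := by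
  intro hb
  rw [Anticommute, eq_neg_of_add_eq_zero_left hb, mul_neg, mul_one, neg_mul, one_mul,
    neg_neg, neg_eq_iff_add_eq_zero] at h
  exact two_ne (by rw [← one_add_one_eq_two, ← ha, ← mul_add, h, mul_zero])

end Anticommute

theorem Commute.anticommute_mul_right {R : Type*} [Ring R] {a b c : R} (hb : Commute a b)
    (hc : Anticommute a c) : Anticommute a (b * c) := by
  rw [Anticommute, ← mul_assoc, hb.eq, mul_assoc, hc, mul_neg, mul_assoc]

namespace Commute

variable {R : Type*} [Ring R] {u v : R}

theorem mul_sub_one_mul_mul_add_one (huv : Commute u v) (hu : u * u = -1) (hv : v * v = -1) :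
    (u * v - 1) * (u * v + 1) = 0 := by
  have : u * v * (u * v) = 1 := by
    rw [mul_assoc u v, ← mul_assoc v, ← huv.eq, mul_assoc u, ← mul_assoc, hu, hv, neg_mul_neg,
      one_mul]
  rw [mul_add, sub_mul, sub_mul, this]
  noncomm_ring

theorem add_mul_mul_add_one (huv : Commute u v) (hu : u * u = -1) (hv : v * v = -1) :
    (u + v) * (u * v + 1) = 0 := by
  calc (u + v) * (u * v + 1) = u * u * v + v * u * v + u + v := by noncomm_ring
    _ = u * u * v + u * (v * v) + u + v := by rw [← huv.eq, mul_assoc u v v]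
    _ = 0 := by rw [hu, hv]; noncomm_ring

end Commute

theorem e_mul_self {a : Fin 5} (ha : a ≠ 4) : e a * e a = 1 := by
  have hQ : Qf (Pi.single a 1) = ![(1 : ℤ), 1, 1, 1, -1] a • (1 : ℝ) :=
    QuadraticMap.weightedSumSquares_single _ a
  rw [e, ι_sq_scalar, hQ]
  fin_cases a <;> simp_all

theorem e_anticommute {a b : Fin 5} (hab : a ≠ b) : Anticommute (e a) (e b) :=
  ι_mul_ι_comm_of_isOrtho (QuadraticMap.isOrtho_weightedSumSquares_single ![1, 1, 1, 1, -1] hab)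

theorem e01_commute_e23 : Commute (e 0 * e 1) (e 2 * e 3) :=
  .mul_right ((e_anticommute (by decide)).commute_mul_right (e_anticommute (by decide))).symm
    ((e_anticommute (by decide)).commute_mul_right (e_anticommute (by decide))).symm

theorem e0123_add_one_ne_zero : e 0 * e 1 * e 2 * e 3 + 1 ≠ 0 := by
  have : CharZero CGA := charZero_of_injective_algebraMap (algebraMap ℝ CGA).injective
  have e0_anticommute : Anticommute (e 0) (e 0 * e 1 * e 2 * e 3) :=
    ((Commute.refl _).anticommute_mul_right (e_anticommute (by decide))).commute_mul_right
      (e_anticommute (by decide)) |>.anticommute_mul_right (e_anticommute (by decide))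
  exact e0_anticommute.add_one_ne_zero (e_mul_self (by decide)) two_ne_zero

theorem secant_points_not_invertible_general (α β : ℝ) :
    ¬ IsUnit (α • (e 0 * e 1 * e 2 * e 3 - 1) + β • (e 0 * e 1 + e 2 * e 3)) := by
  have e01_sq := (e_anticommute (a := 0) (b := 1) (by decide)).mul_mul_self_eq_neg_one
    (e_mul_self (by decide)) (e_mul_self (by decide))
  have e23_sq := (e_anticommute (a := 2) (b := 3) (by decide)).mul_mul_self_eq_neg_one
    (e_mul_self (by decide)) (e_mul_self (by decide))
  have annihilated : (α • (e 0 * e 1 * e 2 * e 3 - 1) + β • (e 0 * e 1 + e 2 * e 3)) *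
      (e 0 * e 1 * e 2 * e 3 + 1) = 0 := by
    rw [add_mul, smul_mul_assoc, smul_mul_assoc, mul_assoc (e 0 * e 1),
      e01_commute_e23.mul_sub_one_mul_mul_add_one e01_sq e23_sq,
      e01_commute_e23.add_mul_mul_add_one e01_sq e23_sq, smul_zero, smul_zero, add_zero]
  exact fun hu => e0123_add_one_ne_zero (hu.mul_right_eq_zero.mp annihilated)

/-- every non-zero real combination α(e₁e₂e₃e₊ - 1) + β(e₁e₂ + e₃e₊),
i.e. every point on the line through n₁ and n₂, is non-invertible in CGA. -/
theorem secant_points_not_invertible (α β : ℝ) (h : ¬ (α = 0 ∧ β = 0)) :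
    ¬ IsUnit (α • (e 0 * e 1 * e 2 * e 3 - 1) + β • (e 0 * e 1 + e 2 * e 3)) :=
  secant_points_not_invertible_general α β
end
end
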